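/- Let d ≥ 2, τ ∈ ℝ, σ, β, ν > 0 and α ∈ (0,1), and write P' := P_Mon,d(σ) ∩ P_Mar,d(τ, β, ν). Then for any n ∈ ℕ, sup over P ∈ P' of the inf over Â ∈ Â_n(τ, α, P') of E_P μ(X_τ(η) \ Â(D)) is at least 1 − α, where μ and η denote the covariate marginal and regression function of P and D ∼ P^n. -/

import Mathlib

open MeasureTheory ProbabilityTheory Real Set
open scoped ENNReal Classical

noncomputable section

/-- `log_+ x := log (x ∨ e)`. -/
def logp (x : ℝ) : ℝ := Real.log (max x (Real.exp 1))

/-- The σ-algebra generated by the covariate `X = Prod.fst`. -/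
def mX (d : ℕ) : MeasurableSpace ((Fin d → ℝ) × ℝ) :=
  MeasurableSpace.comap Prod.fst inferInstance

/-- `η` is (a version of) the regression function `x ↦ E[Y | X = x]` of `P`. -/
def IsRegFn (d : ℕ) (P : Measure ((Fin d → ℝ) × ℝ)) (η : (Fin d → ℝ) → ℝ) : Prop :=
  Measurable η ∧ (fun p => η p.1) =ᵐ[P] P[fun p => p.2 | mX d]

/-- Conditionally on `X`, `Y - η X` is sub-Gaussian with variance parameter `σ²`. -/
def CondSubG (d : ℕ) (σ : ℝ) (P : Measure ((Fin d → ℝ) × ℝ)) (η : (Fin d → ℝ) → ℝ) : Prop :=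
  ∀ t : ℝ, Integrable (fun p => Real.exp (t * (p.2 - η p.1))) P ∧
    (P[fun p => Real.exp (t * (p.2 - η p.1)) | mX d])
      ≤ᵐ[P] fun _ => Real.exp (σ ^ 2 * t ^ 2 / 2)

/-- The class `P_{Mon,d}(σ)`, as a predicate on the pair `(P, η)`. -/
def PMon (d : ℕ) (σ : ℝ) (P : Measure ((Fin d → ℝ) × ℝ)) (η : (Fin d → ℝ) → ℝ) : Prop :=
  IsProbabilityMeasure P ∧ IsRegFn d P η ∧ Monotone η ∧ CondSubG d σ P η

/-- The margin class `P_{Mar,d}(τ, β, ν)`, as a predicate on the pair `(P, η)`. -/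
def PMar (d : ℕ) (τ β ν : ℝ) (P : Measure ((Fin d → ℝ) × ℝ)) (η : (Fin d → ℝ) → ℝ) : Prop :=
  IsProbabilityMeasure P ∧ IsRegFn d P η ∧
    ∀ ξ : ℝ, ξ ∈ Set.Ioc (0 : ℝ) 1 →
      (P.map Prod.fst) (η ⁻¹' Set.Icc τ (τ + ν * ξ ^ β)) ≤ ENNReal.ofReal ξ

/-- Support of a Borel measure: the points all of whose open neighbourhoods have
positive measure. -/
def measSupport {α : Type*} [TopologicalSpace α] [MeasurableSpace α] (μ : Measure α) : Set α :=
  {x | ∀ U : Set α, IsOpen U → x ∈ U → 0 < μ U}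

/-- The regularity class `P_{Reg,d}(τ, θ, γ, λ)`, as a predicate on the pair `(P, η)`. -/
def PReg (d : ℕ) (τ θ γ lam : ℝ) (P : Measure ((Fin d → ℝ) × ℝ)) (η : (Fin d → ℝ) → ℝ) : Prop :=
  IsProbabilityMeasure P ∧ IsRegFn d P η ∧
    ∀ x ∈ {x | τ ≤ η x} ∩ measSupport (P.map Prod.fst), ∀ r : ℝ, r ∈ Set.Ioc (0:ℝ) 1 →
      (ENNReal.ofReal (θ⁻¹ * r ^ d) ≤ (P.map Prod.fst) (Metric.closedBall x r) ∧
        (P.map Prod.fst) (Metric.closedBall x r) ≤ ENNReal.ofReal (θ * (2 * r) ^ d)) ∧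
      (Metric.closedBall x r ∩ {z | τ + lam * r ^ γ ≤ η z}).Nonempty

/-- Indices `i` with `X i ≼ x`, ordered by increasing sup-norm distance to `x`,
ties broken by the original index ordering. -/
def nnOrder {d n : ℕ} (X : Fin n → (Fin d → ℝ)) (x : Fin d → ℝ) : List (Fin n) :=
  List.insertionSort
    (fun i j => ‖X i - x‖ < ‖X j - x‖ ∨ (‖X i - x‖ = ‖X j - x‖ ∧ i ≤ j))
    ((List.finRange n).filter (fun i => decide (X i ≤ x)))

/-- The martingale sums `S_k = ∑_{j=1}^k (Y_{(j)}(x) - τ)/σ`. -/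
def Smart {d n : ℕ} (σ τ : ℝ) (D : Fin n → (Fin d → ℝ) × ℝ) (x : Fin d → ℝ) (k : ℕ) : ℝ :=
  ((((nnOrder (fun i => (D i).1) x).take k).map (fun i => ((D i).2 - τ) / σ)).sum)

/-- The anytime-valid martingale p-value `p̂_{σ,τ}(x, D)`. -/
def phat {d n : ℕ} (σ τ : ℝ) (D : Fin n → (Fin d → ℝ) × ℝ) (x : Fin d → ℝ) : ℝ :=
  ((List.range (nnOrder (fun i => (D i).1) x).length).map (fun k =>
      5.2 * Real.exp (-(max (Smart σ τ D x (k + 1)) 0) ^ 2 / (2.0808 * (k + 1))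
        + Real.log (Real.log (2 * (k + 1))) / 0.72))).foldr min 1

/-- One iteration of the DAG testing procedure `R^ISS`. Edges point from parents to children:
`E a b` means `a` is a parent of `b`; `F` is the weight-one (polyforest) subrelation. -/
def RISSstep {I : Type*} [Fintype I] (E F : I → I → Prop) (α : ℝ) (p : I → ℝ)
    (R : Finset I) : Finset I :=
  let SL : Finset I := Finset.univ.filter (fun i => (∀ j, ¬ F i j) ∧ i ∉ R)
  let SC : Finset I := Finset.univ.filter (fun i => i ∉ R ∧ ∀ j, F j i → j ∈ R)
  let budget : I → ℝ := fun i =>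
    if i ∈ SC then
      ((SL.filter (fun j => j = i ∨ Relation.TransGen F i j)).card : ℝ) * α / (SL.card : ℝ)
    else 0
  let Il : Finset I := Finset.univ.filter (fun i => p i ≤ budget i)
  if Il = ∅ then R
  else R ∪ Il ∪ Finset.univ.filter (fun i => ∃ j ∈ Il, Relation.TransGen E i j)

/-- The DAG testing procedure `R^ISS_α` applied to a polyforest-weighted DAG `(I, E, w)`
(represented by the edge relation `E` and the weight-one subrelation `F`) and p-values `p`. -/
def RISS {I : Type*} [Fintype I] (E F : I → I → Prop) (α : ℝ) (p : I → ℝ) : Finset I :=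
  (RISSstep E F α p)^[Fintype.card I] ∅

/-- Edge relation of the DAG induced by the covariate points `z`. -/
def indE {d m : ℕ} (z : Fin m → (Fin d → ℝ)) (i0 i1 : Fin m) : Prop :=
  i0 ≠ i1 ∧ z i1 ≤ z i0 ∧ ∀ i2, z i1 ≤ z i2 → z i2 ≤ z i0 →
    (z i2 = z i0 ∧ i0 ≤ i2) ∨ (z i2 = z i1 ∧ i2 ≤ i1)

/-- Edge relation of the induced polyforest: among the induced-DAG parents of `i1`, keep the one
of minimal sup-norm distance to `z i1`, ties broken by smallest index. -/
def indF {d m : ℕ} (z : Fin m → (Fin d → ℝ)) (i0 i1 : Fin m) : Prop :=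
  indE z i0 i1 ∧ ∀ i, indE z i i1 →
    (‖z i0 - z i1‖ < ‖z i - z i1‖ ∨ (‖z i0 - z i1‖ = ‖z i - z i1‖ ∧ i0 ≤ i))

/-- The selection set `Â^{ISS}_{σ,τ,α,m}(D)`: the upper hull of the covariate points (among the
first `m` data points) whose hypotheses are rejected by `R^ISS` applied to the induced
polyforest-weighted DAG of `(X_1, …, X_m)` and the martingale p-values `p̂_{σ,τ}(X_i, D)`. -/
def AISS {d n : ℕ} (σ τ α : ℝ) (m : ℕ) (hm : m ≤ n)
    (D : Fin n → (Fin d → ℝ) × ℝ) : Set (Fin d → ℝ) :=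
  let z : Fin m → (Fin d → ℝ) := fun i => (D (Fin.castLE hm i)).1
  {x | ∃ i ∈ RISS (indE z) (indF z) α (fun i => phat σ τ D (z i)), z i ≤ x}

/-- `A` is a valid data-dependent selection set at level `α` for the class `PC`:
it is jointly measurable and satisfies the Type I error guarantee over `PC`. -/
def SelValid (d n : ℕ) (τ α : ℝ)
    (PC : Measure ((Fin d → ℝ) × ℝ) → ((Fin d → ℝ) → ℝ) → Prop)
    (A : (Fin n → (Fin d → ℝ) × ℝ) → Set (Fin d → ℝ)) : Prop :=
  MeasurableSet {q : (Fin n → (Fin d → ℝ) × ℝ) × (Fin d → ℝ) | q.2 ∈ A q.1} ∧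
  ∀ P η, PC P η →
    ENNReal.ofReal (1 - α) ≤ (Measure.pi fun _ : Fin n => P) {ω | A ω ⊆ {x | τ ≤ η x}}

end

/-! Under a distribution whose covariate is atomless on an antichain for `≼` and whose response
is a constant `c > τ`, the regression function may be changed to `τ - 1` below any single point
`x₀` of the antichain without leaving the class, since this only alters it on a null set. Type I
error control against each such alternative forces `x₀ ∉ Â(D)` with probability at least
`1 - α`; averaging over `x₀` by Tonelli, `Â(D)` misses a `μ`-fraction of the superlevel set
`X_τ(η) = ℝ^d` whose expectation is at least `1 - α`. -/

noncomputable section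

def antidiag (d : ℕ) (t : ℝ) : Fin d → ℝ :=
  fun i => if (i : ℕ) = 0 then t else if (i : ℕ) = 1 then -t else 0

lemma measurable_antidiag (d : ℕ) : Measurable (antidiag d) := by
  refine measurable_pi_lambda _ fun i => ?_
  unfold antidiag
  split_ifs
  exacts [measurable_id, measurable_neg, measurable_const]

lemma antidiag_le_antidiag_iff {d : ℕ} (hd : 2 ≤ d) {s t : ℝ} :
    antidiag d s ≤ antidiag d t ↔ s = t := by
  refine ⟨fun h => ?_, fun h => h ▸ le_rfl⟩
  have h0 := h ⟨0, by omega⟩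
  have h1 := h ⟨1, by omega⟩
  simp only [antidiag, if_true, if_neg one_ne_zero, neg_le_neg_iff] at h0 h1
  exact le_antisymm h0 h1

lemma monotone_ite_le {α β : Type*} [Preorder α] [Preorder β] {a b : β} (hab : a ≤ b) (x₀ : α) :
    Monotone fun x => if x ≤ x₀ then a else b := by
  intro x y hxy
  dsimp only
  split_ifs with hx hy hy
  exacts [le_rfl, hab, absurd (hxy.trans hy) hx, le_rfl]

lemma mX_le (d : ℕ) : mX d ≤ (inferInstance : MeasurableSpace ((Fin d → ℝ) × ℝ)) :=
  measurable_fst.comap_le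

section ModelClasses

variable {d : ℕ} {P : Measure ((Fin d → ℝ) × ℝ)} {η : (Fin d → ℝ) → ℝ}

lemma isRegFn_of_ae_eq_const [IsFiniteMeasure P] (hη : Measurable η) {c : ℝ}
    (hY : ∀ᵐ p ∂P, p.2 = c) (hX : ∀ᵐ p ∂P, η p.1 = c) : IsRegFn d P η := by
  refine ⟨hη, ?_⟩
  have hcond : P[fun p => p.2 | mX d] =ᵐ[P] fun _ => c := by
    rw [← condExp_const (μ := P) (mX_le d) c]
    exact condExp_congr_ae hY
  filter_upwards [hX, hcond] with p hp hp'
  rw [hp, hp']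

lemma condSubG_of_ae_eq [IsFiniteMeasure P] (σ : ℝ) (h : ∀ᵐ p ∂P, p.2 = η p.1) :
    CondSubG d σ P η := by
  intro t
  have hone : (fun p : (Fin d → ℝ) × ℝ => Real.exp (t * (p.2 - η p.1))) =ᵐ[P] fun _ => 1 := by
    filter_upwards [h] with p hp
    simp [hp]
  refine ⟨(integrable_const (1 : ℝ)).congr hone.symm, ?_⟩
  have hcond : P[fun p => Real.exp (t * (p.2 - η p.1)) | mX d] =ᵐ[P] fun _ => 1 := by
    rw [← condExp_const (μ := P) (mX_le d) (1 : ℝ)]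
    exact condExp_congr_ae hone
  filter_upwards [hcond] with p hp
  rw [hp]
  exact Real.one_le_exp (by positivity)

lemma pMar_of_forall_notMem [IsProbabilityMeasure P] (hreg : IsRegFn d P η) {τ β ν : ℝ}
    (hβ : 0 ≤ β) (hν : 0 ≤ ν) (h : ∀ x, η x ∉ Icc τ (τ + ν)) : PMar d τ β ν P η := by
  refine ⟨inferInstance, hreg, fun ξ hξ => ?_⟩
  have hξβ : ν * ξ ^ β ≤ ν := mul_le_of_le_one_right hν (Real.rpow_le_one hξ.1.le hξ.2 hβ)
  have hempty : η ⁻¹' Icc τ (τ + ν * ξ ^ β) = ∅ :=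
    eq_empty_of_forall_notMem fun x hx => h x ⟨hx.1, hx.2.trans (by linarith)⟩
  simp [hempty]

end ModelClasses

section HardDistribution

variable (d : ℕ) (ν : Measure ℝ)

def hardDist (c : ℝ) : Measure ((Fin d → ℝ) × ℝ) :=
  ν.map fun t => (antidiag d t, c)

variable {d ν}

lemma measurable_antidiag_prodMk_const (c : ℝ) :
    Measurable fun t => ((antidiag d t, c) : (Fin d → ℝ) × ℝ) :=
  (measurable_antidiag d).prodMk measurable_const

instance [IsProbabilityMeasure ν] (c : ℝ) : IsProbabilityMeasure (hardDist d ν c) :=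
  Measure.isProbabilityMeasure_map (measurable_antidiag_prodMk_const c).aemeasurable

lemma map_fst_hardDist (c : ℝ) : (hardDist d ν c).map Prod.fst = ν.map (antidiag d) := by
  rw [hardDist, Measure.map_map measurable_fst (measurable_antidiag_prodMk_const c)]
  rfl

lemma hardDist_mem [IsProbabilityMeasure ν] {τ σ β ν' c : ℝ} (hβ : 0 ≤ β) (hν' : 0 ≤ ν')
    {η : (Fin d → ℝ) → ℝ} (hη : Measurable η) (hmono : Monotone η)
    (hrange : ∀ x, η x ∉ Icc τ (τ + ν')) (hae : ∀ᵐ t ∂ν, η (antidiag d t) = c) :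
    PMon d σ (hardDist d ν c) η ∧ PMar d τ β ν' (hardDist d ν c) η := by
  have hmeas := measurable_antidiag_prodMk_const (d := d) c
  have hY : ∀ᵐ p ∂hardDist d ν c, p.2 = c :=
    (ae_map_iff hmeas.aemeasurable (measurableSet_eq_fun measurable_snd measurable_const)).2
      (ae_of_all _ fun _ => rfl)
  have hX : ∀ᵐ p ∂hardDist d ν c, η p.1 = c :=
    (ae_map_iff hmeas.aemeasurable
      (measurableSet_eq_fun (hη.comp measurable_fst) measurable_const)).2 hae
  have hreg := isRegFn_of_ae_eq_const hη hY hX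
  have hnoise : ∀ᵐ p ∂hardDist d ν c, p.2 = η p.1 := by
    filter_upwards [hY, hX] with p hp hp'
    rw [hp, hp']
  exact ⟨⟨inferInstance, hreg, hmono, condSubG_of_ae_eq σ hnoise⟩,
    pMar_of_forall_notMem hreg hβ hν' hrange⟩

lemma hardDist_mem_ite [IsProbabilityMeasure ν] [NullSingletonClass ν] (hd : 2 ≤ d)
    {τ σ β ν' c : ℝ} (hβ : 0 ≤ β) (hν' : 0 ≤ ν') (hc : τ + ν' < c) (t : ℝ) :
    PMon d σ (hardDist d ν c) (fun x => if x ≤ antidiag d t then τ - 1 else c) ∧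
      PMar d τ β ν' (hardDist d ν c) (fun x => if x ≤ antidiag d t then τ - 1 else c) := by
  refine hardDist_mem hβ hν' (measurable_const.ite measurableSet_Iic measurable_const)
    (monotone_ite_le (by linarith) _) (fun x => ?_) ?_
  · split_ifs
    exacts [fun h => by linarith [h.1], fun h => by linarith [h.2]]
  · filter_upwards [Measure.ae_ne ν t] with s hs
    rw [if_neg (mt (antidiag_le_antidiag_iff hd).1 hs)]

end HardDistribution

lemma SelValid.le_measure_notMem {d n : ℕ} {τ α : ℝ}
    {PC : Measure ((Fin d → ℝ) × ℝ) → ((Fin d → ℝ) → ℝ) → Prop}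
    {A : (Fin n → (Fin d → ℝ) × ℝ) → Set (Fin d → ℝ)} (hA : SelValid d n τ α PC A)
    {P : Measure ((Fin d → ℝ) × ℝ)} {η : (Fin d → ℝ) → ℝ} (hP : PC P η) {x₀ : Fin d → ℝ}
    (hx₀ : η x₀ < τ) :
    ENNReal.ofReal (1 - α) ≤ (Measure.pi fun _ : Fin n => P) {ω | x₀ ∉ A ω} :=
  (hA.2 P η hP).trans <| measure_mono fun _ hω hx => hx₀.not_ge (hω hx)

lemma le_lintegral_measure_compl {Ω X : Type*} [MeasurableSpace Ω] [MeasurableSpace X]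
    {Q : Measure Ω} {μ : Measure X} [SFinite Q] [IsProbabilityMeasure μ] {A : Ω → Set X}
    (hA : MeasurableSet {q : Ω × X | q.2 ∈ A q.1}) {c : ℝ≥0∞}
    (h : ∀ᵐ x ∂μ, c ≤ Q {ω | x ∉ A ω}) :
    c ≤ ∫⁻ ω, μ (A ω)ᶜ ∂Q :=
  calc c = ∫⁻ _, c ∂μ := by rw [lintegral_const, measure_univ, mul_one]
    _ ≤ ∫⁻ x, Q {ω | x ∉ A ω} ∂μ := lintegral_mono_ae h
    _ = (Q.prod μ) {q | q.2 ∈ A q.1}ᶜ := (Measure.prod_apply_symm hA.compl).symm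
    _ = ∫⁻ ω, μ (A ω)ᶜ ∂Q := Measure.prod_apply hA.compl

instance : IsProbabilityMeasure (volume.restrict (Icc (0 : ℝ) 1)) := ⟨by simp⟩

end

theorem statement9_general (d : ℕ) (hd : 2 ≤ d) (τ σ β ν : ℝ) (hβ : 0 < β) (hν : 0 < ν)
    (α : ℝ) (n : ℕ) :
    ENNReal.ofReal (1 - α) ≤
      ⨆ (P : Measure ((Fin d → ℝ) × ℝ)) (η : (Fin d → ℝ) → ℝ)
          (_ : PMon d σ P η ∧ PMar d τ β ν P η),
        ⨅ (A : (Fin n → (Fin d → ℝ) × ℝ) → Set (Fin d → ℝ))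
            (_ : SelValid d n τ α (fun P' η' => PMon d σ P' η' ∧ PMar d τ β ν P' η') A),
          ∫⁻ ω, (P.map Prod.fst) ({x | τ ≤ η x} \ A ω)
            ∂(Measure.pi fun _ : Fin n => P) := by
  set unif := volume.restrict (Icc (0 : ℝ) 1)
  set c := τ + ν + 1
  have hc : τ + ν < c := by linarith
  have hmem := hardDist_mem (d := d) (ν := unif) (σ := σ) hβ.le hν.le measurable_const
    monotone_const (fun _ h => hc.not_ge h.2) (ae_of_all _ fun _ => rfl)
  refine le_iSup_of_le _ <| le_iSup_of_le _ <| le_iSup_of_le hmem <| le_iInf₂ fun A hA => ?_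
  have hnotMem (t : ℝ) : ENNReal.ofReal (1 - α) ≤
      (Measure.pi fun _ : Fin n => hardDist d unif c) {ω | antidiag d t ∉ A ω} :=
    hA.le_measure_notMem (hardDist_mem_ite hd (σ := σ) hβ.le hν.le hc t) (by simp)
  have hsuper : {x : Fin d → ℝ | τ ≤ c} = univ := eq_univ_of_forall fun _ => by
    show τ ≤ c; linarith
  simp_rw [hsuper, ← compl_eq_univ_sdiff, map_fst_hardDist]
  have := Measure.isProbabilityMeasure_map (μ := unif) (measurable_antidiag d).aemeasurable
  exact le_lintegral_measure_compl hA.1 <| (ae_map_iff (measurable_antidiag d).aemeasurable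
    (measurableSet_le measurable_const (measurable_measure_prodMk_right hA.1.compl))).2
    (ae_of_all _ hnotMem)

/-- Proposition 1: for `d ≥ 2`, even over `P' = P_{Mon,d}(σ) ∩ P_{Mar,d}(τ,β,ν)`, no
data-dependent selection set with Type I error control can have worst-case expected regret
smaller than `1 - α`. -/
theorem statement9 (d : ℕ) (hd : 2 ≤ d) (τ σ β ν : ℝ) (hσ : 0 < σ) (hβ : 0 < β) (hν : 0 < ν)
    (α : ℝ) (hα : α ∈ Set.Ioo (0 : ℝ) 1) (n : ℕ) (hn : 0 < n) :
    ENNReal.ofReal (1 - α) ≤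
      ⨆ (P : Measure ((Fin d → ℝ) × ℝ)) (η : (Fin d → ℝ) → ℝ)
          (_ : PMon d σ P η ∧ PMar d τ β ν P η),
        ⨅ (A : (Fin n → (Fin d → ℝ) × ℝ) → Set (Fin d → ℝ))
            (_ : SelValid d n τ α (fun P' η' => PMon d σ P' η' ∧ PMar d τ β ν P' η') A),
          ∫⁻ ω, (P.map Prod.fst) ({x | τ ≤ η x} \ A ω)
            ∂(Measure.pi fun _ : Fin n => P) :=
  statement9_general d hd τ σ β ν hβ hν α n
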